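/- Let m = 1 (or general m ≥ 1, n = 2m), let h be harmonic near a ∈ ℝ² and let φ(z) = (log |z−a|²)^α · h(z) with constant α ≥ 0. Then for small r > 0, the harmonic residue Res_a(φ,r) := −∫_{∂B(a,r)} d^c φ equals −α (log r²)^{α−1} h(a). -/

import Mathlib

open MeasureTheory Metric Set Filter
open scoped Topology RealInnerProductSpace

noncomputable section

/-- Euclidean n-space. -/
abbrev Euc (n : ℕ) := EuclideanSpace ℝ (Fin n)

/-- The surface measure on the unit sphere of `ℝⁿ`. -/
def unitSphereM (n : ℕ) : Measure (sphere (0 : Euc n) 1) :=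
  (volume : Measure (Euc n)).toSphere

/-- `σ_{n-1}`, the total surface area of the unit sphere in `ℝⁿ`. -/
def sphereArea (n : ℕ) : ℝ := (unitSphereM n Set.univ).toReal

/-- `ω_n`, the volume of the unit ball in `ℝⁿ`. -/
def ballVol (n : ℕ) : ℝ := (volume (ball (0 : Euc n) 1)).toReal

/-- The spherical mean `(1/(σ_{n-1} t^{n-1})) ∫_{∂B(a,t)} φ dσ`, expressed by
rescaling the sphere integral to the unit sphere. -/
def sphMean {n : ℕ} (φ : Euc n → ℝ) (a : Euc n) (t : ℝ) : ℝ :=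
  (sphereArea n)⁻¹ * ∫ ω : sphere (0 : Euc n) 1, φ (a + t • (ω : Euc n)) ∂(unitSphereM n)

/-- The solid mean `(1/(ω_n r^n)) ∫_{B(a,r)} φ dV`. -/
def solidMean {n : ℕ} (φ : Euc n → ℝ) (a : Euc n) (r : ℝ) : ℝ :=
  (ballVol n * r ^ n)⁻¹ * ∫ x in ball a r, φ x

/-- The Laplacian `Δφ = Σ ∂²φ/∂xᵢ²`. -/
def lap {n : ℕ} (φ : Euc n → ℝ) (x : Euc n) : ℝ :=
  ∑ i : Fin n,
    fderiv ℝ (fun y => fderiv ℝ φ y (EuclideanSpace.single i 1)) x (EuclideanSpace.single i 1)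

/-- The divergence of a vector field on `ℝⁿ`. -/
def divg {n : ℕ} (F : Euc n → Euc n) (x : Euc n) : ℝ :=
  ∑ i : Fin n,
    ⟪fderiv ℝ F x (EuclideanSpace.single i 1), (EuclideanSpace.single i 1 : Euc n)⟫

/-- The Laplacian on `ℂ ≅ ℝ²`. -/
def lapC (f : ℂ → ℝ) (z : ℂ) : ℝ :=
  fderiv ℝ (fun w => fderiv ℝ f w 1) z 1 +
    fderiv ℝ (fun w => fderiv ℝ f w Complex.I) z Complex.I

/-! Since `h` is harmonic, the mean value property gives
`∫₀^{2π} φ(a + ρe^{iθ}) dθ = 2π h(a) (log ρ²)^α` for all small `ρ`, so the residue is obtained by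
differentiating `ρ ↦ (log ρ²)^α`. -/

open InnerProductSpace Laplacian

lemma lapC_eq_laplacian {f : ℂ → ℝ} {z : ℂ} (hf : ContDiffAt ℝ 2 f z) : lapC f z = Δ f z := by
  have hdf : DifferentiableAt ℝ (fderiv ℝ f) z :=
    (hf.fderiv_right (m := 1) le_rfl).differentiableAt one_ne_zero
  simp [lapC, laplacian_eq_iteratedFDeriv_complexPlane, iteratedFDeriv_two_apply,
    fderiv_clm_apply hdf (differentiableAt_const _)]

lemma harmonicOnNhd_of_lapC_eq_zero {f : ℂ → ℝ} {U : Set ℂ} (hU : IsOpen U)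
    (hf : ContDiffOn ℝ 2 f U) (hlap : ∀ z ∈ U, lapC f z = 0) : HarmonicOnNhd f U := by
  intro z hz
  refine ⟨hf.contDiffAt (hU.mem_nhds hz), ?_⟩
  filter_upwards [hU.mem_nhds hz] with w hw
  rw [← lapC_eq_laplacian (hf.contDiffAt (hU.mem_nhds hw)), hlap w hw, Pi.zero_apply]

lemma InnerProductSpace.HarmonicOnNhd.integral_circleMap_eq {f : ℂ → ℝ} {c : ℂ} {R : ℝ}
    (hf : HarmonicOnNhd f (closedBall c |R|)) :
    ∫ θ in (0 : ℝ)..(2 * Real.pi), f (circleMap c R θ) = 2 * Real.pi * f c := by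
  rw [← hf.circleAverage_eq, Real.circleAverage_def, smul_eq_mul,
    mul_inv_cancel_left₀ (by positivity)]

lemma hasDerivAt_rpow_log_sq (α : ℝ) {r : ℝ} (hr : r ≠ 0) (hlog : Real.log (r ^ 2) ≠ 0) :
    HasDerivAt (fun ρ : ℝ => Real.log (ρ ^ 2) ^ α)
      (α * Real.log (r ^ 2) ^ (α - 1) * (2 / r)) r := by
  have := ((hasDerivAt_pow 2 r).log (pow_ne_zero 2 hr)).rpow_const (p := α) (Or.inl hlog)
  convert this using 1
  field_simp
  ring

theorem stmt_8_general (a : ℂ) (U : Set ℂ) (hU : IsOpen U) (haU : a ∈ U)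
    (h : ℂ → ℝ) (hh : ContDiffOn ℝ 2 h U) (hharm : ∀ z ∈ U, lapC h z = 0)
    (α : ℝ) (φ : ℂ → ℝ)
    (hφ : ∀ z : ℂ, φ z = Real.log (‖z - a‖ ^ 2) ^ α * h z) :
    ∃ ε > (0 : ℝ), ∀ r ∈ Ioo (0 : ℝ) ε,
      -(1 / (4 * Real.pi)) * r *
          deriv (fun ρ : ℝ =>
            ∫ θ in (0 : ℝ)..(2 * Real.pi), φ (a + ρ * Complex.exp (θ * Complex.I))) r
        = -α * Real.log (r ^ 2) ^ (α - 1) * h a := by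
  obtain ⟨ε, hε, hεU⟩ := Metric.nhds_basis_closedBall.mem_iff.1 (hU.mem_nhds haU)
  have hmean : ∀ ρ : ℝ, |ρ| < ε → ∫ θ in (0 : ℝ)..(2 * Real.pi),
      φ (a + ρ * Complex.exp (θ * Complex.I)) = Real.log (ρ ^ 2) ^ α * (2 * Real.pi * h a) := by
    intro ρ hρ
    have hharmρ : HarmonicOnNhd h (closedBall a |ρ|) :=
      (harmonicOnNhd_of_lapC_eq_zero hU hh hharm).mono
        ((closedBall_subset_closedBall hρ.le).trans hεU)
    change ∫ θ in (0 : ℝ)..(2 * Real.pi), φ (circleMap a ρ θ) = _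
    simp_rw [hφ, circleMap_sub_center, norm_circleMap_zero, sq_abs,
      intervalIntegral.integral_const_mul, hharmρ.integral_circleMap_eq]
  -- `r < 1` keeps `log (r ^ 2)` away from `0`, where `x ↦ x ^ α` need not be differentiable.
  refine ⟨min ε 1, lt_min hε one_pos, fun r ⟨hr0, hr⟩ => ?_⟩
  have hr1 : r < 1 := hr.trans_le (min_le_right _ _)
  have hlog : Real.log (r ^ 2) ≠ 0 := (Real.log_neg (by positivity) (by nlinarith)).ne
  have hnear : ∀ᶠ ρ in 𝓝 r, |ρ| < ε :=
    (isOpen_lt continuous_abs continuous_const).mem_nhds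
      (show |r| < ε by rw [abs_of_pos hr0]; exact hr.trans_le (min_le_left _ _))
  rw [Filter.EventuallyEq.deriv_eq (hnear.mono hmean),
    ((hasDerivAt_rpow_log_sq α hr0.ne' hlog).mul_const _).deriv]
  field_simp
  ring

theorem stmt_8 (a : ℂ) (U : Set ℂ) (hU : IsOpen U) (haU : a ∈ U)
    (h : ℂ → ℝ) (hh : ContDiffOn ℝ 2 h U) (hharm : ∀ z ∈ U, lapC h z = 0)
    (α : ℝ) (hα : 0 ≤ α) (φ : ℂ → ℝ)
    (hφ : ∀ z : ℂ, φ z = Real.log (‖z - a‖ ^ 2) ^ α * h z) :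
    ∃ ε > (0 : ℝ), ∀ r ∈ Ioo (0 : ℝ) ε,
      -(1 / (4 * Real.pi)) * r *
          deriv (fun ρ : ℝ =>
            ∫ θ in (0 : ℝ)..(2 * Real.pi), φ (a + ρ * Complex.exp (θ * Complex.I))) r
        = -α * Real.log (r ^ 2) ^ (α - 1) * h a :=
  stmt_8_general a U hU haU h hh hharm α φ hφ
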